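/- arXiv:1504.01997 — 5 statements merged into one kernel-verified Lean document; each statement's English description precedes it below -/
import Mathlib

section
/- For all real numbers a₁, a₂, a₃, b₁, b₂, b₃ there exists a point (x, y) ∈ ℝ² satisfying the system x² − y² + a₁x + a₂y + a₃ = 0 and xy + b₁x + b₂y + b₃ = 0. (This is the nonemptiness part of the paper's claim that the system {f_a = 0, g_b = 0} always has 2 or 4 real solutions counted with multiplicities.) -/
lemma exists_large_quartic (e₃ e₂ e₁ e₀ : ℝ) :
    ∃ M : ℝ, 0 < M ∧ 0 < M^4 + e₃*M^3 + e₂*M^2 + e₁*M + e₀ := by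
  set M : ℝ := 1 + |e₃| + |e₂| + |e₁| + |e₀| with hM
  have h1 : (1:ℝ) ≤ M := by
    have := abs_nonneg e₃; have := abs_nonneg e₂
    have := abs_nonneg e₁; have := abs_nonneg e₀
    rw [hM]; linarith
  have hMpos : (0:ℝ) < M := by linarith
  have hM2 : M ≤ M^2 := by nlinarith
  have hM3 : M^2 ≤ M^3 := by nlinarith
  have h1M3 : (1:ℝ) ≤ M^3 := by nlinarith
  have hexp : M^4 = M^3 + |e₃| * M^3 + |e₂| * M^3 + |e₁| * M^3 + |e₀| * M^3 := by
    rw [hM]; ring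
  have p3 : -|e₃| * M^3 ≤ e₃ * M^3 :=
    mul_le_mul_of_nonneg_right (neg_abs_le e₃) (by nlinarith)
  have p2 : -|e₂| * M^2 ≤ e₂ * M^2 :=
    mul_le_mul_of_nonneg_right (neg_abs_le e₂) (by nlinarith)
  have p1 : -|e₁| * M ≤ e₁ * M :=
    mul_le_mul_of_nonneg_right (neg_abs_le e₁) (by nlinarith)
  have p0 : -|e₀| ≤ e₀ := neg_abs_le e₀
  have q2 : |e₂| * M^2 ≤ |e₂| * M^3 :=
    mul_le_mul_of_nonneg_left hM3 (abs_nonneg e₂)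
  have q1 : |e₁| * M ≤ |e₁| * M^3 :=
    mul_le_mul_of_nonneg_left (le_trans hM2 hM3) (abs_nonneg e₁)
  have q0 : |e₀| * 1 ≤ |e₀| * M^3 :=
    mul_le_mul_of_nonneg_left h1M3 (abs_nonneg e₀)
  refine ⟨M, hMpos, ?_⟩
  nlinarith [h1M3]

/-- For all real parameters the system `x² − y² + a₁x + a₂y + a₃ = 0`,
`xy + b₁x + b₂y + b₃ = 0` has a real solution. -/
theorem quadratic_system_has_real_solution (a₁ a₂ a₃ b₁ b₂ b₃ : ℝ) :
    ∃ x y : ℝ, x ^ 2 - y ^ 2 + a₁ * x + a₂ * y + a₃ = 0 ∧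
      x * y + b₁ * x + b₂ * y + b₃ = 0 := by
  set c : ℝ := b₁ * b₂ - b₃ with hc
  by_cases hc0 : c = 0
  · -- degenerate hyperbola: union of two lines
    have hb3 : b₃ = b₁ * b₂ := by rw [hc] at hc0; linarith
    by_cases hd : 0 ≤ a₂^2 + 4*(b₂^2 - a₁*b₂ + a₃)
    · set s := Real.sqrt (a₂^2 + 4*(b₂^2 - a₁*b₂ + a₃)) with hs
      have hss : s^2 = a₂^2 + 4*(b₂^2 - a₁*b₂ + a₃) := Real.sq_sqrt hd
      exact ⟨-b₂, (a₂ + s)/2, by nlinarith, by nlinarith⟩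
    · have hd2 : 0 ≤ a₁^2 - 4*(a₃ - b₁^2 - a₂*b₁) := by
        nlinarith [sq_nonneg (a₁ - 2*b₂), sq_nonneg (a₂ + 2*b₁)]
      set s := Real.sqrt (a₁^2 - 4*(a₃ - b₁^2 - a₂*b₁)) with hs
      have hss : s^2 = a₁^2 - 4*(a₃ - b₁^2 - a₂*b₁) := Real.sq_sqrt hd2
      exact ⟨(-a₁ + s)/2, -b₁, by nlinarith, by nlinarith⟩
  · -- genuine hyperbola: parametrize and find a root of a quartic by IVT
    set g : ℝ → ℝ := fun t =>
      t^2*(t-b₂)^2 - (c-b₁*t)^2 + a₁*t^2*(t-b₂) + a₂*t*(c-b₁*t) + a₃*t^2 with hg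
    have hcont : Continuous g := by fun_prop
    obtain ⟨M, hM0, hMpos⟩ := exists_large_quartic (a₁ - 2*b₂)
      (b₂^2 - b₁^2 - a₁*b₂ - a₂*b₁ + a₃) (2*b₁*c + a₂*c) (-(c^2))
    have hgM : 0 < g M := by
      have heq : g M = M^4 + (a₁ - 2*b₂)*M^3 + (b₂^2 - b₁^2 - a₁*b₂ - a₂*b₁ + a₃)*M^2
          + (2*b₁*c + a₂*c)*M + (-(c^2)) := by
        simp only [hg]; ring
      rw [heq]; exact hMpos
    have hg0 : g 0 < 0 := by
      have heq : g 0 = -(c^2) := by simp [hg]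
      rw [heq]
      have hcp : 0 < c^2 := by
        rcases lt_or_eq_of_le (sq_nonneg c) with h | h
        · exact h
        · exact absurd (sq_eq_zero_iff.mp h.symm) hc0
      linarith
    have hsub : Set.Icc (g 0) (g M) ⊆ g '' Set.Icc 0 M :=
      intermediate_value_Icc hM0.le hcont.continuousOn
    obtain ⟨t, ht, hgt⟩ := hsub ⟨hg0.le, hgM.le⟩
    have ht0 : t ≠ 0 := by
      rintro rfl; rw [hgt] at hg0; exact lt_irrefl 0 hg0
    have hgt' : t^2*(t-b₂)^2 - (c-b₁*t)^2 + a₁*t^2*(t-b₂) + a₂*t*(c-b₁*t) + a₃*t^2 = 0 := by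
      rw [← hgt]
    refine ⟨t - b₂, c/t - b₁, ?_, ?_⟩
    · have key2 : ((t - b₂) ^ 2 - (c/t - b₁) ^ 2 + a₁ * (t - b₂) + a₂ * (c/t - b₁) + a₃)
          * t^2 = t^2*(t-b₂)^2 - (c-b₁*t)^2 + a₁*t^2*(t-b₂) + a₂*t*(c-b₁*t) + a₃*t^2 := by
        field_simp
      have key : ((t - b₂) ^ 2 - (c/t - b₁) ^ 2 + a₁ * (t - b₂) + a₂ * (c/t - b₁) + a₃)
          * t^2 = 0 := key2.trans hgt'
      rcases mul_eq_zero.mp key with h | h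
      · exact h
      · exact absurd h (pow_ne_zero 2 ht0)
    · have key : ((t - b₂) * (c/t - b₁) + b₁ * (t - b₂) + b₂ * (c/t - b₁) + b₃) * t = 0 := by
        field_simp
        linear_combination t * hc
      rcases mul_eq_zero.mp key with h | h
      · exact h
      · exact absurd h ht0
end

section
/- There is no continuous map φ : ℝ⁶ → ℝ² sending every parameter tuple (a₁, a₂, a₃, b₁, b₂, b₃) ∈ ℝ⁶ to a point (x, y) = φ(a₁,a₂,a₃,b₁,b₂,b₃) satisfying x² − y² + a₁x + a₂y + a₃ = 0 and xy + b₁x + b₂y + b₃ = 0. (In the paper's terms: the covering number of the projection from the incidence variety of (parameter, solution) pairs to the parameter space ℝ⁶ is not less than 2, since one can emulate the complex equation z² = A inside this system.) -/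
open Real Complex

/-- There is no continuous map `φ : ℝ⁶ → ℝ²` sending every parameter tuple
`(a₁, a₂, a₃, b₁, b₂, b₃)` to a solution `(x, y)` of the system
`x² − y² + a₁x + a₂y + a₃ = 0`, `xy + b₁x + b₂y + b₃ = 0`. -/
theorem no_continuous_global_solution_selector :
    ¬ ∃ φ : (Fin 6 → ℝ) → ℝ × ℝ, Continuous φ ∧
      ∀ a : Fin 6 → ℝ,
        (φ a).1 ^ 2 - (φ a).2 ^ 2 + a 0 * (φ a).1 + a 1 * (φ a).2 + a 2 = 0 ∧
        (φ a).1 * (φ a).2 + a 3 * (φ a).1 + a 4 * (φ a).2 + a 5 = 0 := by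
  rintro ⟨φ, hc, hφ⟩
  -- parameter path around the circle
  set p : ℝ → (Fin 6 → ℝ) :=
    fun θ i => if i = 2 then -Real.cos θ else if i = 5 then -Real.sin θ / 2 else 0 with hp
  have hpc : Continuous p := by
    apply continuous_pi
    intro i
    fin_cases i <;> simp [hp] <;> fun_prop
  -- the selected complex solution
  set c : ℝ → ℂ := fun θ => ((φ (p θ)).1 : ℂ) + ((φ (p θ)).2 : ℂ) * Complex.I with hcdef
  have hcc : Continuous c := by fun_prop
  have hsq : ∀ θ, c θ ^ 2 = Complex.exp (θ * Complex.I) := by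
    intro θ
    obtain ⟨h1, h2⟩ := hφ (p θ)
    have e0 : p θ 0 = 0 := by simp [hp]
    have e1 : p θ 1 = 0 := by simp [hp]
    have e2 : p θ 2 = -Real.cos θ := by simp [hp]
    have e3 : p θ 3 = 0 := by simp [hp]
    have e4 : p θ 4 = 0 := by simp [hp]
    have e5 : p θ 5 = -Real.sin θ / 2 := by simp [hp]
    rw [e0, e1, e2] at h1
    rw [e3, e4, e5] at h2
    rw [Complex.exp_mul_I]
    apply Complex.ext
    · simp [hcdef, pow_two, Complex.mul_re, Complex.add_re, Complex.cos_ofReal_re]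
      nlinarith [h1, h2]
    · simp [hcdef, pow_two, Complex.mul_im, Complex.add_im, Complex.sin_ofReal_re]
      nlinarith [h1, h2]
  -- h θ = c θ * exp(-(θ/2) i), squares to 1
  set h : ℝ → ℂ := fun θ => c θ * Complex.exp (-(θ / 2 : ℝ) * Complex.I) with hhdef
  have hh1 : ∀ θ, h θ ^ 2 = 1 := by
    intro θ
    have e : h θ ^ 2 = c θ ^ 2 * (Complex.exp (-(θ / 2 : ℝ) * Complex.I)
        * Complex.exp (-(θ / 2 : ℝ) * Complex.I)) := by simp [hhdef]; ring
    rw [e, hsq, ← Complex.exp_add, ← Complex.exp_add]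
    rw [show (θ : ℂ) * Complex.I + (-(θ / 2 : ℝ) * Complex.I + -(θ / 2 : ℝ) * Complex.I)
        = 0 by push_cast; ring]
    exact Complex.exp_zero
  have hhc : Continuous h := by fun_prop
  have hval : ∀ θ, h θ = 1 ∨ h θ = -1 := by
    intro θ
    have e : (h θ - 1) * (h θ + 1) = 0 := by linear_combination hh1 θ
    rcases mul_eq_zero.mp e with h' | h'
    · left; linear_combination h'
    · right; linear_combination h'
  -- the real part
  set g : ℝ → ℝ := fun θ => (h θ).re with hgdef
  have hgc : Continuous g := Complex.continuous_re.comp hhc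
  have hgval : ∀ θ, g θ = 1 ∨ g θ = -1 := by
    intro θ
    rcases hval θ with h' | h' <;> simp [hgdef, h']
  -- h (2π) = - h 0 since parameters are periodic but exp(-θ/2·i) flips sign
  have hper : c (2 * Real.pi) = c 0 := by
    simp [hcdef, hp, Real.cos_two_pi, Real.sin_two_pi]
  have hexp : Complex.exp (-((2 * Real.pi / 2 : ℝ) : ℂ) * Complex.I) = -1 := by
    have e : (-((2 * Real.pi / 2 : ℝ) : ℂ) * Complex.I)
        = -((Real.pi : ℂ) * Complex.I) := by push_cast; ring
    rw [e, Complex.exp_neg, Complex.exp_pi_mul_I]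
    norm_num
  have hflip : h (2 * Real.pi) = - h 0 := by
    simp only [hhdef, hper, hexp]
    norm_num
  -- intermediate value theorem gives a zero of g, contradiction
  have hg0 : g (2 * Real.pi) = - g 0 := by simp [hgdef, hflip]
  have hmem : (0 : ℝ) ∈ Set.uIcc (g 0) (g (2 * Real.pi)) := by
    rcases hgval 0 with h0 | h0 <;> rw [hg0, h0] <;>
      simp [Set.uIcc]
  obtain ⟨t, _, ht⟩ := intermediate_value_uIcc (a := 0) (b := 2 * Real.pi)
    (hgc.continuousOn) hmem
  rcases hgval t with h' | h' <;> rw [ht] at h' <;> norm_num at h'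
end

section
/- Let n be an even positive integer. Then there is no polynomial P with real coefficients such that for every t ∈ [−1, 1], the Lebesgue volume of the set {x ∈ ℝⁿ : ‖x‖ ≤ 1 and x₁ ≥ t} equals P(t). (This is a special case of the fact that the volume function cut by hyperplanes from a compact domain with C^∞-smooth boundary in ℝ^{2k} is never algebraic.) -/
/-!
Slicing the ball perpendicular to the first axis gives
`V(t) = κ ∫ₜ¹ (1 - s²)^((n-1)/2) ds`, where `κ > 0` is the volume of the unit ball of dimension
`n - 1`. If `V = P` on `[-1, 1]` with `P` a polynomial, then `P'(t)² = κ² (1 - t²)^(n-1)` on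
`(-1, 1)`, hence as polynomials. Comparing the multiplicities of the root `1` on both sides gives
`2 · mult₁(P') = n - 1`, which is odd.
-/

open MeasureTheory Polynomial

namespace Polynomial

theorem even_of_sq_eq_mul_X_sub_C_pow {R : Type*} [CommRing R] [IsDomain R] {D q : R[X]} {a : R}
    {m : ℕ} (hq : ¬q.IsRoot a) (h : D ^ 2 = q * (X - C a) ^ m) : Even m := by
  have hq0 : q ≠ 0 := by rintro rfl; simp at hq
  have hD : D * D ≠ 0 := by
    rw [← sq, h]
    exact mul_ne_zero hq0 (pow_ne_zero _ (X_sub_C_ne_zero a))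
  have hmult := congrArg (rootMultiplicity a) h
  rw [sq, rootMultiplicity_mul hD, rootMultiplicity_mul_X_sub_C_pow hq0,
    rootMultiplicity_eq_zero hq, zero_add] at hmult
  exact ⟨_, hmult.symm⟩

theorem eval_derivative_eq_neg_of_eval_eq_integral {P : ℝ[X]} {f : ℝ → ℝ} {a b : ℝ}
    (hf : Continuous f) (hP : ∀ t ∈ Set.Icc a b, P.eval t = ∫ s in t..b, f s) :
    ∀ t ∈ Set.Ioo a b, P.derivative.eval t = -f t := by
  intro t ht
  have hF : HasDerivAt (fun u => ∫ s in u..b, f s) (-f t) t :=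
    intervalIntegral.integral_hasDerivAt_left (hf.intervalIntegrable _ _)
      hf.stronglyMeasurable.stronglyMeasurableAtFilter hf.continuousAt
  refine (P.hasDerivAt t).unique (hF.congr_of_eventuallyEq ?_)
  filter_upwards [Ioo_mem_nhds ht.1 ht.2] with u hu
  exact hP u (Set.Ioo_subset_Icc_self hu)

end Polynomial

theorem volume_setOf_sum_sq_le (m : ℕ) {c : ℝ} (hc : 0 ≤ c) :
    volume {y : Fin m → ℝ | ∑ j, y j ^ 2 ≤ c} =
      ENNReal.ofReal (√c ^ m) * volume (Metric.ball (0 : EuclideanSpace ℝ (Fin m)) 1) := by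
  have hset : {y : Fin m → ℝ | ∑ j, y j ^ 2 ≤ c} =
      WithLp.toLp 2 ⁻¹' Metric.closedBall (0 : EuclideanSpace ℝ (Fin m)) √c := by
    ext y
    simp [EuclideanSpace.norm_eq, Real.sqrt_le_sqrt_iff hc]
  rw [hset, (PiLp.volume_preserving_toLp (Fin m)).measure_preimage
    measurableSet_closedBall.nullMeasurableSet, Measure.addHaar_closedBall _ _ (Real.sqrt_nonneg c),
    finrank_euclideanSpace_fin]

theorem volume_unit_ball_cap_eq_lintegral (m : ℕ) {t : ℝ} (ht : -1 ≤ t) :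
    volume {x : EuclideanSpace ℝ (Fin (m + 1)) | ‖x‖ ≤ 1 ∧ t ≤ x 0} =
      (∫⁻ s in Set.Icc t 1, ENNReal.ofReal (√(1 - s ^ 2) ^ m)) *
        volume (Metric.ball (0 : EuclideanSpace ℝ (Fin m)) 1) := by
  let U : Set (ℝ × (Fin m → ℝ)) := {p | p.1 ^ 2 + ∑ j, p.2 j ^ 2 ≤ 1} ∩ {p | t ≤ p.1}
  have hU : MeasurableSet U :=
    (measurableSet_le (by fun_prop) (by fun_prop)).inter
      (measurableSet_le (by fun_prop) (by fun_prop))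
  have hcap : {x : EuclideanSpace ℝ (Fin (m + 1)) | ‖x‖ ≤ 1 ∧ t ≤ x 0} =
      (MeasurableEquiv.piFinSuccAbove (fun _ => ℝ) 0 ∘ WithLp.ofLp) ⁻¹' U := by
    ext x
    simp [U, EuclideanSpace.norm_eq, Real.sqrt_le_one, Fin.sum_univ_succ, Fin.tail]
  have hslice (s : ℝ) : volume (Prod.mk s ⁻¹' U) = (Set.Icc t 1).indicator
      (fun s => ENNReal.ofReal (√(1 - s ^ 2) ^ m) *
        volume (Metric.ball (0 : EuclideanSpace ℝ (Fin m)) 1)) s := by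
    by_cases hs : s ∈ Set.Icc t 1
    · have hsq : 0 ≤ 1 - s ^ 2 := by nlinarith [hs.1, hs.2]
      have hsec : Prod.mk s ⁻¹' U = {y : Fin m → ℝ | ∑ j, y j ^ 2 ≤ 1 - s ^ 2} := by
        ext y
        simp only [U, Set.mem_preimage, Set.mem_inter_iff, Set.mem_ofPred_eq, hs.1, and_true]
        constructor <;> intro h <;> linarith
      rw [Set.indicator_of_mem hs, hsec, volume_setOf_sum_sq_le m hsq]
    · have hsec : Prod.mk s ⁻¹' U = ∅ := by
        ext y
        simp only [U, Set.mem_preimage, Set.mem_inter_iff, Set.mem_ofPred_eq,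
          Set.mem_empty_iff_false, iff_false]
        rintro ⟨h1, h2⟩
        have : 0 ≤ ∑ j, y j ^ 2 := by positivity
        exact hs ⟨h2, by nlinarith⟩
      rw [Set.indicator_of_notMem hs, hsec, measure_empty]
  rw [hcap, ((volume_preserving_piFinSuccAbove (fun _ => ℝ) 0).comp
      (PiLp.volume_preserving_ofLp _)).measure_preimage hU.nullMeasurableSet,
    Measure.volume_eq_prod, Measure.prod_apply hU]
  simp_rw [hslice]
  rw [lintegral_indicator measurableSet_Icc, lintegral_mul_const _ (by fun_prop)]

theorem toReal_volume_unit_ball_cap (m : ℕ) {t : ℝ} (ht : t ∈ Set.Icc (-1) 1) :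
    (volume {x : EuclideanSpace ℝ (Fin (m + 1)) | ‖x‖ ≤ 1 ∧ t ≤ x 0}).toReal =
      ∫ s in t..1,
        √(1 - s ^ 2) ^ m * (volume (Metric.ball (0 : EuclideanSpace ℝ (Fin m)) 1)).toReal := by
  have hf : Continuous fun s : ℝ => √(1 - s ^ 2) ^ m := by fun_prop
  rw [volume_unit_ball_cap_eq_lintegral m ht.1, ENNReal.toReal_mul,
    intervalIntegral.integral_mul_const,
    ← ofReal_integral_eq_lintegral_ofReal hf.integrableOn_Icc (.of_forall fun s => by positivity),
    ENNReal.toReal_ofReal (setIntegral_nonneg measurableSet_Icc fun s _ => by positivity),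
    integral_Icc_eq_integral_Ioc, intervalIntegral.integral_of_le ht.2]

/-- For even positive `n`, the volume of the cap cut from the unit ball in `ℝⁿ`
by the hyperplane `x₁ = t` is not a polynomial function of `t` on `[-1, 1]`. -/
theorem ball_cap_volume_not_polynomial_of_even_dim (n : ℕ) (hpos : 0 < n) (heven : Even n) :
    ¬ ∃ P : Polynomial ℝ, ∀ t ∈ Set.Icc (-1 : ℝ) 1,
      (volume {x : EuclideanSpace ℝ (Fin n) | ‖x‖ ≤ 1 ∧ t ≤ x ⟨0, hpos⟩}).toReal =
        P.eval t := by
  rintro ⟨P, hP⟩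
  obtain ⟨m, rfl⟩ : ∃ m, n = m + 1 := ⟨n - 1, by omega⟩
  have hm : ¬Even m := Nat.even_add_one.mp heven
  set κ := (volume (Metric.ball (0 : EuclideanSpace ℝ (Fin m)) 1)).toReal
  have hκ : κ ≠ 0 :=
    (ENNReal.toReal_pos (Metric.measure_ball_pos volume 0 one_pos).ne' measure_ball_lt_top.ne).ne'
  have hderiv := P.eval_derivative_eq_neg_of_eval_eq_integral (by fun_prop)
    fun t ht => (hP t ht).symm.trans (toReal_volume_unit_ball_cap m ht)
  have hsq : P.derivative ^ 2 = C (κ ^ 2) * (-(X + 1)) ^ m * (X - C 1) ^ m := by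
    refine eq_of_infinite_eval_eq _ _ ((Set.Ioo_infinite (by norm_num : (-1 : ℝ) < 1)).mono
      fun t ht => ?_)
    have h : √(1 - t ^ 2) ^ 2 = 1 - t ^ 2 := Real.sq_sqrt (by nlinarith [ht.1, ht.2])
    simp only [Set.mem_ofPred_eq, eval_pow, eval_mul, eval_neg, eval_add, eval_sub, eval_C, eval_X,
      eval_one, hderiv t ht]
    calc (-(√(1 - t ^ 2) ^ m * κ)) ^ 2 = κ ^ 2 * (√(1 - t ^ 2) ^ 2) ^ m := by ring
      _ = κ ^ 2 * ((-(t + 1)) * (t - 1)) ^ m := by rw [h]; ring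
      _ = _ := by rw [mul_pow, mul_assoc]
  exact hm (even_of_sq_eq_mul_X_sub_C_pow (by simp [hκ]) hsq)
end

section
/- Let p be a polynomial over ℂ of degree n ≥ 2, let z₀ be a simple root of p (i.e. p(z₀) = 0 and p′(z₀) ≠ 0), and let d be the minimal distance from z₀ to the other roots of p, i.e. d = min{|z − z₀| : p(z) = 0, z ≠ z₀}. Then for every starting point w₀ with |w₀ − z₀| < d/(2n − 1), the Newton iteration w_{k+1} = w_k − p(w_k)/p′(w_k) is well defined for all k (i.e. p′(w_k) ≠ 0 for every k) and the sequence (w_k) converges to z₀. -/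
/-!
Near `z₀`, write `p'(v) / p(v) = 1 / (v - z₀) + S(v)` with `S(v) = ∑ 1 / (v - z)` over the other
roots `z`. If `‖v - z₀‖ ≤ r < d`, then `‖S(v)‖ ≤ (n - 1) / (d - r)`, so `a = (v - z₀) S(v)` has
`‖a‖ ≤ q := r (n - 1) / (d - r)`, and `N(v) - z₀ = (v - z₀) a / (1 + a)` gives
`‖N(v) - z₀‖ ≤ q / (1 - q) * ‖v - z₀‖`. For `r = ‖w₀ - z₀‖ < d / (2n - 1)` we get `q < 1/2`, so
`N` contracts the distance to `z₀` by the factor `q / (1 - q) < 1` on the closed disc of radius `r`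
around `z₀`; the iterates stay in that disc and converge geometrically to `z₀`.
-/

open Polynomial Filter

theorem norm_mul_div_one_add_le {K : Type*} [NormedField K] {u a : K} {q : ℝ} (ha : ‖a‖ ≤ q)
    (hq : q < 1) : ‖u * a / (1 + a)‖ ≤ q / (1 - q) * ‖u‖ := by
  have hlow : 1 - q ≤ ‖1 + a‖ := by
    have := norm_sub_norm_le (1 : K) (-a)
    rw [norm_neg, sub_neg_eq_add, norm_one] at this
    linarith
  have hq' : 0 < 1 - q := by linarith
  rw [norm_div, norm_mul, div_le_iff₀ (hq'.trans_le hlow)]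
  calc ‖u‖ * ‖a‖ ≤ ‖u‖ * q := by gcongr
    _ = q / (1 - q) * ‖u‖ * (1 - q) := by field_simp
    _ ≤ q / (1 - q) * ‖u‖ * ‖1 + a‖ := by
        gcongr
        exact mul_nonneg (div_nonneg ((norm_nonneg a).trans ha) hq'.le) (norm_nonneg u)

theorem norm_multiset_sum_inv_sub_le {K : Type*} [NormedField K] {s : Multiset K} {z₀ v : K}
    {d r : ℝ} (hfar : ∀ z ∈ s, d ≤ ‖z - z₀‖) (hv : ‖v - z₀‖ ≤ r) (hrd : r < d) :
    ‖(s.map fun z ↦ (v - z)⁻¹).sum‖ ≤ s.card / (d - r) := by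
  have hterm : ∀ z ∈ s, ‖(v - z)⁻¹‖ ≤ (d - r)⁻¹ := fun z hz ↦ by
    have : d - r ≤ ‖v - z‖ := by
      have := norm_sub_le_norm_sub_add_norm_sub z v z₀
      rw [norm_sub_rev z v] at this
      linarith [hfar z hz]
    rw [norm_inv]
    exact inv_anti₀ (by linarith) this
  calc ‖(s.map fun z ↦ (v - z)⁻¹).sum‖
      ≤ (s.map fun z ↦ ‖(v - z)⁻¹‖).sum := by
        simpa [Multiset.map_map] using norm_multiset_sum_le (s.map fun z ↦ (v - z)⁻¹)
    _ ≤ s.card • (d - r)⁻¹ := by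
        simpa using Multiset.sum_le_card_nsmul _ _ (Multiset.forall_mem_map_iff.mpr hterm)
    _ = s.card / (d - r) := by rw [nsmul_eq_mul, div_eq_mul_inv]

namespace Polynomial

variable {K : Type*}

theorem Splits.eval_derivative_eq_eval_mul_sum_inv [Field K] {f : K[X]} (hf : f.Splits) {x : K}
    (hx : ¬f.IsRoot x) :
    f.derivative.eval x = f.eval x * (f.roots.map fun a ↦ (x - a)⁻¹).sum := by
  classical
  rw [hf.eval_derivative, hf.eval_eq_prod_roots, mul_assoc]
  congr 1
  rw [← Multiset.sum_map_mul_left]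
  refine congrArg _ (Multiset.map_congr rfl fun a ha ↦ ?_)
  have hxa : x - a ≠ 0 := sub_ne_zero.mpr fun h ↦ hx (h ▸ (mem_roots'.mp ha).2)
  rw [← Multiset.prod_map_erase ha, mul_comm (x - a), mul_assoc, mul_inv_cancel₀ hxa, mul_one]

theorem notMem_roots_erase_of_eval_derivative_ne_zero [Field K] [DecidableEq K] {p : K[X]}
    {z : K} (h : p.derivative.eval z ≠ 0) : z ∉ p.roots.erase z := by
  have hp : p ≠ 0 := by rintro rfl; simp at h
  have hmult : p.rootMultiplicity z ≤ 1 :=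
    not_lt.mp fun h1 ↦ h ((one_lt_rootMultiplicity_iff_isRoot hp).mp h1).2
  rw [← Multiset.count_eq_zero, Multiset.count_erase_self, count_roots]
  omega

theorem newtonMap_eq_sub_div [Field K] (p : K[X]) (x : K) :
    p.newtonMap x = x - p.eval x / p.derivative.eval x := by
  simp [newtonMap_apply, Ring.inverse_eq_inv', div_eq_inv_mul]

theorem Splits.norm_newtonMap_sub_le [NormedField K] [DecidableEq K] {p : K[X]}
    (hp : p.Splits) {z₀ v : K} (hroot : p.IsRoot z₀) (hsimple : p.derivative.eval z₀ ≠ 0)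
    {d r q : ℝ} (hfar : ∀ z ∈ p.roots.erase z₀, d ≤ ‖z - z₀‖) (hv : ‖v - z₀‖ ≤ r) (hrd : r < d)
    (hq : r * (p.roots.erase z₀).card / (d - r) ≤ q) (hq1 : q < 1) :
    p.derivative.eval v ≠ 0 ∧ ‖p.newtonMap v - z₀‖ ≤ q / (1 - q) * ‖v - z₀‖ := by
  rcases eq_or_ne v z₀ with rfl | hvz
  · simp [newtonMap_eq_sub_div, hroot.eq_zero, hsimple]
  set s := p.roots.erase z₀
  have hp0 : p ≠ 0 := by rintro rfl; simp at hsimple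
  have hroots : p.roots = z₀ ::ₘ s := (Multiset.cons_erase ((mem_roots hp0).mpr hroot)).symm
  have hpv : p.eval v ≠ 0 := fun h ↦ by
    have hvs : v ∈ s := by simpa [hroots, hvz] using (mem_roots hp0).mpr h
    linarith [hfar v hvs]
  have hu : v - z₀ ≠ 0 := sub_ne_zero.mpr hvz
  set a := (v - z₀) * (s.map fun z ↦ (v - z)⁻¹).sum
  have ha : ‖a‖ ≤ q := calc
    ‖a‖ ≤ r * (s.card / (d - r)) := by
      rw [norm_mul]
      exact mul_le_mul hv (norm_multiset_sum_inv_sub_le hfar hv hrd) (norm_nonneg _)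
        ((norm_nonneg _).trans hv)
    _ ≤ q := by rwa [← mul_div_assoc]
  have h1a : 1 + a ≠ 0 := fun h ↦ by
    have : ‖a‖ = 1 := by rw [eq_neg_of_add_eq_zero_right h, norm_neg, norm_one]
    linarith
  have hderiv : p.derivative.eval v = p.eval v * (1 + a) / (v - z₀) := by
    rw [hp.eval_derivative_eq_eval_mul_sum_inv hpv, hroots, Multiset.map_cons,
      Multiset.sum_cons]
    simp only [a]
    field_simp
  refine ⟨by rw [hderiv]; exact div_ne_zero (mul_ne_zero hpv h1a) hu, ?_⟩
  have hnewton : p.newtonMap v - z₀ = (v - z₀) * a / (1 + a) := by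
    rw [newtonMap_eq_sub_div, hderiv]
    field_simp
    ring
  rw [hnewton]
  exact norm_mul_div_one_add_le ha hq1

end Polynomial

section

variable {X : Type*} [PseudoMetricSpace X] {f : X → X} {x₀ : X} {K r : ℝ} {w : ℕ → X}

theorem dist_le_of_dist_map_le (hK1 : K ≤ 1)
    (hf : ∀ v, dist v x₀ ≤ r → dist (f v) x₀ ≤ K * dist v x₀) (hw : ∀ k, w (k + 1) = f (w k))
    (h0 : dist (w 0) x₀ ≤ r) (k : ℕ) : dist (w k) x₀ ≤ r := by
  induction k with
  | zero => exact h0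
  | succ k ih =>
    rw [hw]
    exact (hf _ ih).trans ((mul_le_of_le_one_left dist_nonneg hK1).trans ih)

theorem dist_le_pow_mul_of_dist_map_le (hK0 : 0 ≤ K) (hK1 : K ≤ 1)
    (hf : ∀ v, dist v x₀ ≤ r → dist (f v) x₀ ≤ K * dist v x₀) (hw : ∀ k, w (k + 1) = f (w k))
    (h0 : dist (w 0) x₀ ≤ r) (k : ℕ) : dist (w k) x₀ ≤ K ^ k * dist (w 0) x₀ := by
  induction k with
  | zero => simp
  | succ k ih =>
    calc dist (w (k + 1)) x₀ ≤ K * dist (w k) x₀ :=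
          hw k ▸ hf _ (dist_le_of_dist_map_le hK1 hf hw h0 k)
      _ ≤ K * (K ^ k * dist (w 0) x₀) := by gcongr
      _ = K ^ (k + 1) * dist (w 0) x₀ := by ring

theorem tendsto_of_dist_map_le (hK0 : 0 ≤ K) (hK1 : K < 1)
    (hf : ∀ v, dist v x₀ ≤ r → dist (f v) x₀ ≤ K * dist v x₀) (hw : ∀ k, w (k + 1) = f (w k))
    (h0 : dist (w 0) x₀ ≤ r) : Tendsto w atTop (nhds x₀) := by
  refine tendsto_iff_dist_tendsto_zero.mpr (squeeze_zero (fun _ ↦ dist_nonneg)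
    (dist_le_pow_mul_of_dist_map_le hK0 hK1.le hf hw h0) ?_)
  simpa using (tendsto_pow_atTop_nhds_zero_of_lt_one hK0 hK1).mul_const (dist (w 0) x₀)

end

/-- Convergence of Newton's method: if `z₀` is a simple root of a polynomial `p` of
degree `n ≥ 2` and `d` is the minimal distance from `z₀` to the other roots of `p`,
then Newton's iteration starting at any point `w₀` with `|w₀ − z₀| < d/(2n − 1)` is
well defined (the derivative never vanishes along the iteration) and converges to `z₀`. -/
theorem newton_method_convergence_radius
    (p : Polynomial ℂ) (hdeg : 2 ≤ p.natDegree)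
    (z₀ : ℂ) (hroot : p.eval z₀ = 0) (hsimple : p.derivative.eval z₀ ≠ 0)
    (d : ℝ)
    (hd : IsLeast {r : ℝ | ∃ z : ℂ, p.eval z = 0 ∧ z ≠ z₀ ∧ r = ‖z - z₀‖} d)
    (w₀ : ℂ) (hw₀ : ‖w₀ - z₀‖ < d / (2 * (p.natDegree : ℝ) - 1))
    (w : ℕ → ℂ) (hw0 : w 0 = w₀)
    (hwrec : ∀ k, w (k + 1) = w k - p.eval (w k) / p.derivative.eval (w k)) :
    (∀ k, p.derivative.eval (w k) ≠ 0) ∧ Tendsto w atTop (nhds z₀) := by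
  have hp0 : p ≠ 0 := by rintro rfl; simp at hsimple
  have hfar : ∀ z ∈ p.roots.erase z₀, d ≤ ‖z - z₀‖ := fun z hz ↦
    hd.2 ⟨z, (mem_roots hp0).mp (Multiset.mem_of_mem_erase hz),
      ne_of_mem_of_not_mem hz (notMem_roots_erase_of_eval_derivative_ne_zero hsimple), rfl⟩
  have hcard : ((p.roots.erase z₀).card : ℝ) = p.natDegree - 1 := by
    rw [Multiset.card_erase_of_mem ((mem_roots hp0).mpr hroot),
      IsAlgClosed.card_roots_eq_natDegree, Nat.pred_eq_sub_one,
      Nat.cast_sub (by omega : 1 ≤ p.natDegree), Nat.cast_one]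
  have hn : (2 : ℝ) ≤ p.natDegree := by exact_mod_cast hdeg
  set r := ‖w₀ - z₀‖
  have hr : r * (2 * p.natDegree - 1) < d := (lt_div_iff₀ (by linarith)).mp hw₀
  have hrd : r < d := by nlinarith [norm_nonneg (w₀ - z₀)]
  set q := r * (p.natDegree - 1) / (d - r)
  have hq0 : 0 ≤ q := div_nonneg (mul_nonneg (norm_nonneg _) (by linarith)) (by linarith)
  have hq : q < 1 / 2 := by rw [div_lt_iff₀ (by linarith)]; nlinarith
  have hK0 : 0 ≤ q / (1 - q) := div_nonneg hq0 (by linarith)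
  have hK1 : q / (1 - q) < 1 := (div_lt_one (by linarith)).mpr (by linarith)
  have hstep : ∀ v, dist v z₀ ≤ r →
      p.derivative.eval v ≠ 0 ∧ dist (p.newtonMap v) z₀ ≤ q / (1 - q) * dist v z₀ := by
    intro v hv
    simp only [dist_eq_norm] at hv ⊢
    exact (IsAlgClosed.splits p).norm_newtonMap_sub_le hroot hsimple hfar hv hrd
      (by rw [hcard]) (by linarith)
  have hw : ∀ k, w (k + 1) = p.newtonMap (w k) := fun k ↦ by rw [hwrec, newtonMap_eq_sub_div]
  have hw₀r : dist (w 0) z₀ ≤ r := by rw [hw0, dist_eq_norm]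
  have hcontract := fun v hv ↦ (hstep v hv).2
  exact ⟨fun k ↦ (hstep _ (dist_le_of_dist_map_le hK1.le hcontract hw hw₀r k)).1,
    tendsto_of_dist_map_le hK0 hK1 hcontract hw hw₀r⟩
end

section
/- Let n ≥ 2 and let F be a homogeneous polynomial of degree d ≥ 3 in the n+1 complex variables x₀, …, x_n whose projective zero locus is smooth, i.e. for every x ∈ ℂ^{n+1} with x ≠ 0 and F(x) = 0, the gradient (∂F/∂x₀(x), …, ∂F/∂x_n(x)) is nonzero. Then there exists x ∈ ℂ^{n+1}, x ≠ 0, with F(x) = 0 and det(∂²F/∂xᵢ∂xⱼ(x))_{i,j} = 0; that is, the hypersurface has a parabolic point. (This is the paper's assertion that smooth algebraic projective hypersurfaces of degree ≥ 3 always have parabolic points.) -/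
/-!
The Hessian determinant of `F` is a form of degree `(n + 1) (d - 2) > 0` (or zero), so it suffices
that two nonzero forms `P`, `Q` of positive degree in at least three variables over `ℂ` have a
common nontrivial zero. If they had none, the Nullstellensatz would put every form of large degree
into the ideal `(P, Q)`, and counting dimensions of graded pieces would make the second difference
of the Hilbert function `s ↦ dim ℂ[x]_s` eventually nonpositive, so that it grows at most linearly;
in three or more variables it grows quadratically.
-/

open MvPolynomial

lemma exists_linear_bound_of_add_add_le {g : ℕ → ℕ} (hg : Monotone g) {p q T : ℕ} (hp : 0 < p)
    (h : ∀ s, T ≤ s → g (s + p + q) + g s ≤ g (s + q) + g (s + p)) :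
    ∃ C, ∀ k, g (T + k * q) ≤ C * (k + 1) := by
  set W := g (T + p + q)
  have hstep : ∀ s, T ≤ s → g (s + q) ≤ g s + W := by
    intro s
    induction s using Nat.strong_induction_on with
    | _ s ih =>
      intro hs
      by_cases hsp : s < T + p
      · have : g (s + q) ≤ W := hg (by omega)
        omega
      · have := ih (s - p) (by omega) (by omega)
        have := h (s - p) (by omega)
        rw [Nat.sub_add_cancel (by omega : p ≤ s)] at this
        omega
  refine ⟨g T + W, fun k => ?_⟩
  induction k with
  | zero => simp
  | succ k ih =>
    have := hstep (T + k * q) (by omega)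
    rw [add_assoc, ← Nat.succ_mul] at this
    nlinarith

lemma not_forall_sq_half_succ_le_of_linear_bound {g : ℕ → ℕ} {q T C : ℕ} (hq : 0 < q)
    (hC : ∀ k, g (T + k * q) ≤ C * (k + 1)) : ¬ ∀ s, (s / 2 + 1) ^ 2 ≤ g s := by
  intro hg
  have hle := (hg (T + 4 * C * q)).trans (hC (4 * C))
  have : 2 * C ≤ (T + 4 * C * q) / 2 := by
    rw [Nat.le_div_iff_mul_le two_pos]; nlinarith
  nlinarith

namespace MvPolynomial

section Hessian

variable {σ ι R : Type*} [CommRing R]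

lemma IsHomogeneous.det [Fintype ι] [DecidableEq ι] {M : Matrix ι ι (MvPolynomial σ R)} {e : ℕ}
    (hM : ∀ i j, (M i j).IsHomogeneous e) : M.det.IsHomogeneous (Fintype.card ι * e) := by
  rw [Matrix.det_apply]
  refine IsHomogeneous.sum _ _ _ fun τ _ => ?_
  have hprod := IsHomogeneous.prod Finset.univ (fun i => M (τ i) i) (fun _ => e)
    fun i _ => hM _ _
  rw [Finset.sum_const, Finset.card_univ, smul_eq_mul] at hprod
  rw [Units.smul_def]
  exact (homogeneousSubmodule σ R _).toAddSubgroup.zsmul_mem hprod _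

noncomputable def hessian (F : MvPolynomial σ R) : Matrix σ σ (MvPolynomial σ R) :=
  Matrix.of fun i j => pderiv i (pderiv j F)

variable [Fintype σ] [DecidableEq σ]

lemma eval_det_hessian (F : MvPolynomial σ R) (x : σ → R) :
    eval x (hessian F).det = (Matrix.of fun i j => eval x (pderiv i (pderiv j F))).det :=
  RingHom.map_det _ _

lemma IsHomogeneous.det_hessian {F : MvPolynomial σ R} {d : ℕ} (hF : F.IsHomogeneous d) :
    (hessian F).det.IsHomogeneous (Fintype.card σ * (d - 2)) :=
  IsHomogeneous.det fun _ _ => hF.pderiv.pderiv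

end Hessian

section HilbertFunction

variable (σ K : Type*) [Field K]

noncomputable def hilbertFunction (s : ℕ) : ℕ :=
  Module.finrank K (homogeneousSubmodule σ K s)

variable {σ K}

lemma hilbertFunction_eq_card (s : ℕ) :
    hilbertFunction σ K s = Nat.card {d : σ →₀ ℕ // d.degree = s} := by
  rw [hilbertFunction, homogeneousSubmodule_eq_finsupp_supported,
    (AddMonoidAlgebra.supportedEquivFinsupp _).finrank_eq,
    Module.finrank_eq_nat_card_basis Finsupp.basisSingleOne]
  rfl

instance [Finite σ] (s : ℕ) : Finite {d : σ →₀ ℕ // d.degree = s} :=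
  (Finsupp.finite_of_degree_eq s).to_subtype

instance [Finite σ] (s : ℕ) : Module.Finite K (homogeneousSubmodule σ K s) :=
  Module.Finite.iff_fg.mpr (homogeneousSubmodule_fg σ K s)

lemma hilbertFunction_monotone [Finite σ] [Nonempty σ] : Monotone (hilbertFunction σ K) := by
  refine monotone_nat_of_le_succ fun s => ?_
  let i : σ := Classical.arbitrary σ
  simp only [hilbertFunction_eq_card]
  refine Nat.card_le_card_of_injective (fun d => ⟨d.1 + Finsupp.single i 1, by simp [d.2]⟩) ?_
  intro d e h
  exact Subtype.ext (add_right_cancel (congrArg Subtype.val h))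

lemma sq_half_succ_le_hilbertFunction [Finite σ] (hσ : 3 ≤ Nat.card σ) (s : ℕ) :
    (s / 2 + 1) ^ 2 ≤ hilbertFunction σ K s := by
  have := Fintype.ofFinite σ
  obtain ⟨e⟩ : Nonempty (Fin 3 ↪ σ) :=
    Function.Embedding.nonempty_of_card_le (by simpa [Nat.card_eq_fintype_card] using hσ)
  let f : Fin (s / 2 + 1) × Fin (s / 2 + 1) → {d : σ →₀ ℕ // d.degree = s} := fun ab =>
    ⟨Finsupp.single (e 0) (ab.1 : ℕ) + Finsupp.single (e 1) (ab.2 : ℕ)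
      + Finsupp.single (e 2) (s - ab.1 - ab.2),
      by simp only [map_add, Finsupp.degree_single]; omega⟩
  have hf : Function.Injective f := by
    intro ab cd h
    have h0 := congrArg (fun d => d.1 (e 0)) h
    have h1 := congrArg (fun d => d.1 (e 1)) h
    simp [f, e.injective.eq_iff] at h0 h1
    exact Prod.ext (Fin.ext h0) (Fin.ext h1)
  simpa [hilbertFunction_eq_card, sq] using Nat.card_le_card_of_injective f hf

lemma finrank_map_mulLeft {P : MvPolynomial σ K} (hP : P ≠ 0) (s : ℕ) :
    Module.finrank K ((homogeneousSubmodule σ K s).map (LinearMap.mulLeft K P)) =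
      hilbertFunction σ K s :=
  LinearEquiv.finrank_eq (Submodule.equivMapOfInjective _ (mul_right_injective₀ hP) _).symm

lemma map_mulLeft_le {P : MvPolynomial σ K} {p : ℕ} (hP : P.IsHomogeneous p) (s : ℕ) :
    (homogeneousSubmodule σ K s).map (LinearMap.mulLeft K P) ≤
      homogeneousSubmodule σ K (s + p) := by
  rintro _ ⟨a, ha, rfl⟩
  exact add_comm p s ▸ hP.mul ha

section
attribute [local instance] MvPolynomial.gradedAlgebra

lemma homogeneousComponent_mul_of_isHomogeneous {R : Type*} [CommSemiring R]
    {P : MvPolynomial σ R} {p : ℕ} (hP : P.IsHomogeneous p) (a : MvPolynomial σ R) (t : ℕ) :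
    homogeneousComponent (t + p) (a * P) = homogeneousComponent t a * P := by
  rw [← decomposition.decompose'_apply, ← decomposition.decompose'_apply]
  exact DirectSum.coe_decompose_mul_add_of_right_mem (homogeneousSubmodule σ R)
    ((mem_homogeneousSubmodule _ _).mpr hP)

end

/-- The images of the degree `s + q` and `s + p` parts under multiplication by `P` and `Q` span the
degree `s + p + q` part, and their intersection contains `P * Q` times the degree `s` part. -/
lemma hilbertFunction_add_add_le [Finite σ] {P Q : MvPolynomial σ K} {p q s : ℕ}
    (hP : P.IsHomogeneous p) (hQ : Q.IsHomogeneous q) (hP0 : P ≠ 0) (hQ0 : Q ≠ 0)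
    (hspan : ∀ φ : MvPolynomial σ K, φ.IsHomogeneous (s + p + q) → φ ∈ Ideal.span {P, Q}) :
    hilbertFunction σ K (s + p + q) + hilbertFunction σ K s ≤
      hilbertFunction σ K (s + q) + hilbertFunction σ K (s + p) := by
  set A := (homogeneousSubmodule σ K (s + q)).map (LinearMap.mulLeft K P)
  set B := (homogeneousSubmodule σ K (s + p)).map (LinearMap.mulLeft K Q)
  have hA : A ≤ homogeneousSubmodule σ K (s + p + q) := add_right_comm s p q ▸ map_mulLeft_le hP _
  have hB : B ≤ homogeneousSubmodule σ K (s + p + q) := map_mulLeft_le hQ _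
  have : Module.Finite K A := Submodule.finiteDimensional_of_le hA
  have : Module.Finite K B := Submodule.finiteDimensional_of_le hB
  have hsup : homogeneousSubmodule σ K (s + p + q) ≤ A ⊔ B := by
    intro φ hφ
    obtain ⟨u, v, huv⟩ := Ideal.mem_span_pair.mp (hspan φ hφ)
    rw [← homogeneousComponent_eq_self hφ, ← huv, map_add, add_right_comm,
      homogeneousComponent_mul_of_isHomogeneous hP, add_right_comm,
      homogeneousComponent_mul_of_isHomogeneous hQ]
    exact Submodule.add_mem_sup ⟨_, homogeneousComponent_mem _ u, mul_comm _ _⟩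
      ⟨_, homogeneousComponent_mem _ v, mul_comm _ _⟩
  have hinf : (homogeneousSubmodule σ K s).map (LinearMap.mulLeft K (P * Q)) ≤ A ⊓ B := by
    rintro _ ⟨c, hc, rfl⟩
    exact ⟨⟨Q * c, add_comm q s ▸ hQ.mul hc, (mul_assoc P Q c).symm⟩,
      ⟨P * c, add_comm p s ▸ hP.mul hc, by simp only [LinearMap.mulLeft_apply]; ring⟩⟩
  have hdim := Submodule.finrank_sup_add_finrank_inf_eq A B
  have hsup_dim := Submodule.finrank_mono hsup
  have hinf_dim := Submodule.finrank_mono hinf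
  rw [finrank_map_mulLeft hP0, finrank_map_mulLeft hQ0] at hdim
  rw [finrank_map_mulLeft (mul_ne_zero hP0 hQ0)] at hinf_dim
  exact hdim ▸ add_le_add hsup_dim hinf_dim

end HilbertFunction

variable {σ K : Type*} [Field K]

lemma IsHomogeneous.mem_span_X_pow {R : Type*} [CommSemiring R] {φ : MvPolynomial σ R} {t : ℕ} (hφ : φ.IsHomogeneous t) :
    φ ∈ Ideal.span (Set.range X) ^ t := by
  rw [Ideal.mem_span_pow_iff_exists_isHomogeneous]
  exact ⟨map C φ, hφ.map C, by rw [eval_map, eval₂_eta]⟩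

lemma exists_span_X_pow_le_of_zeroLocus_subset [IsAlgClosed K] [Finite σ]
    {I : Ideal (MvPolynomial σ K)} (hI : zeroLocus K I ⊆ {0}) :
    ∃ N, Ideal.span (Set.range X) ^ N ≤ I := by
  refine Ideal.exists_pow_le_of_le_radical_of_fg ?_ (Submodule.fg_span (Set.finite_range X))
  rw [Ideal.span_le, ← vanishingIdeal_zeroLocus_eq_radical (K := K)]
  rintro _ ⟨i, rfl⟩
  rw [SetLike.mem_coe, mem_vanishingIdeal_iff]
  intro x hx
  rw [hI hx]
  simp

theorem exists_common_zero_of_isHomogeneous [IsAlgClosed K] [Finite σ] (hσ : 3 ≤ Nat.card σ)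
    {P Q : MvPolynomial σ K} {p q : ℕ} (hp : 0 < p) (hq : 0 < q)
    (hP : P.IsHomogeneous p) (hQ : Q.IsHomogeneous q) (hP0 : P ≠ 0) (hQ0 : Q ≠ 0) :
    ∃ x : σ → K, x ≠ 0 ∧ eval x P = 0 ∧ eval x Q = 0 := by
  by_contra! hno
  have : Nonempty σ := Nat.card_pos_iff.mp (by omega) |>.1
  obtain ⟨N, hN⟩ := exists_span_X_pow_le_of_zeroLocus_subset (I := Ideal.span {P, Q}) <| by
    intro x hx
    by_contra hx0
    rw [mem_zeroLocus_iff] at hx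
    exact hno x hx0 (hx P (Ideal.subset_span (by simp))) (hx Q (Ideal.subset_span (by simp)))
  obtain ⟨C, hC⟩ := exists_linear_bound_of_add_add_le (hilbertFunction_monotone (K := K)) (T := N) hp
    fun s hs => hilbertFunction_add_add_le hP hQ hP0 hQ0 fun φ hφ =>
      hN (Ideal.pow_le_pow_right (by omega) hφ.mem_span_X_pow)
  exact not_forall_sq_half_succ_le_of_linear_bound hq hC (sq_half_succ_le_hilbertFunction hσ)

end MvPolynomial

/-- A smooth projective hypersurface of degree `d ≥ 3` in `ℂℙⁿ`, `n ≥ 2`, always has a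
parabolic point: a point of the (affine cone over the) hypersurface where the Hessian
matrix of its homogeneous equation is degenerate. -/
theorem smooth_projective_hypersurface_has_parabolic_point
    (n d : ℕ) (hn : 2 ≤ n) (hd : 3 ≤ d)
    (F : MvPolynomial (Fin (n + 1)) ℂ) (hF : F.IsHomogeneous d)
    (hsmooth : ∀ x : Fin (n + 1) → ℂ, x ≠ 0 → eval x F = 0 →
      ∃ i : Fin (n + 1), eval x (pderiv i F) ≠ 0) :
    ∃ x : Fin (n + 1) → ℂ, x ≠ 0 ∧ eval x F = 0 ∧
      Matrix.det (Matrix.of fun i j : Fin (n + 1) => eval x (pderiv i (pderiv j F))) = 0 := by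
  have hF0 : F ≠ 0 := by
    rintro rfl
    obtain ⟨i, hi⟩ := hsmooth 1 one_ne_zero (map_zero _)
    simp at hi
  have hcard : 3 ≤ Nat.card (Fin (n + 1)) := by simpa using (by omega : 3 ≤ n + 1)
  simp_rw [← eval_det_hessian]
  by_cases hH : (hessian F).det = 0
  · obtain ⟨x, hx, hFx, -⟩ :=
      exists_common_zero_of_isHomogeneous hcard (by omega) (by omega) hF hF hF0 hF0
    exact ⟨x, hx, hFx, by rw [hH, map_zero]⟩
  · have hdeg : 0 < Fintype.card (Fin (n + 1)) * (d - 2) := by simp; omega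
    exact exists_common_zero_of_isHomogeneous hcard (by omega) hdeg hF hF.det_hessian hF0 hH
end
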